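/- Let τ > 0 and let γ_τ be the Gaussian measure on ℝ with mean 0 and variance τ. Then for every s ∈ ℝ and every f ∈ L²(ℝ; ℂ) with ‖f‖_{H^{s+4}} < ∞, the second-order estimate on the expected propagator holds: ∫_ℝ (1+|ξ|²)^s · | ∫_ℝ (e^{−i x |ξ|²} − 1) dγ_τ(x) |² · |𝓕f(ξ)|² dξ ≤ (τ²/4) · ‖f‖_{H^{s+4}}². (This is the key estimate ‖E(S(t_n,r) − I) g‖²_{H^s} ≲ (r − t_n)² ‖g‖²_{H^{s+4}}, which follows from the Gaussian characteristic function identity ∫ e^{−i x ξ²} dγ_τ(x) = e^{−τ ξ⁴/2} and the inequality |e^{−y} − 1| ≤ y for y ≥ 0, and which yields local order two in the splitting scheme analysis.) -/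

import Mathlib

open MeasureTheory Complex Real
open scoped ENNReal NNReal FourierTransform ComplexConjugate

noncomputable section

/-- `L²(ℝ; ℂ)`. -/
abbrev L2 : Type := Lp ℂ 2 (volume : Measure ℝ)

/-- `F` is the Fourier–Plancherel transform on `L²(ℝ; ℂ)`: a unitary operator that agrees
with the Fourier integral `𝓕 f (ξ) = ∫ e^{−2πixξ} f(x) dx` on `L¹ ∩ L²`. -/
def IsFourierPlancherel (F : L2 ≃ₗᵢ[ℂ] L2) : Prop :=
  ∀ (f : ℝ → ℂ) (_ : Integrable f (volume : Measure ℝ))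
    (hf2 : MemLp f 2 (volume : Measure ℝ)),
    (F (hf2.toLp f) : ℝ → ℂ) =ᵐ[volume] 𝓕 f

/-- Multiplication by a bounded continuous symbol maps `L²` to `L²`. -/
lemma memℒp_mul_symbol (m : ℝ → ℂ) (hm : Continuous m) (hm1 : ∀ ξ, ‖m ξ‖ ≤ 1)
    (g : L2) : MemLp (fun ξ => m ξ * (g : ℝ → ℂ) ξ) 2 (volume : Measure ℝ) := by
  refine ⟨hm.aestronglyMeasurable.mul (Lp.aestronglyMeasurable g), ?_⟩
  refine lt_of_le_of_lt (eLpNorm_mono fun x => ?_) (Lp.eLpNorm_lt_top g)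
  rw [norm_mul]
  calc ‖m x‖ * ‖(g : ℝ → ℂ) x‖ ≤ 1 * ‖(g : ℝ → ℂ) x‖ := by
        gcongr; exact hm1 x
    _ = ‖(g : ℝ → ℂ) x‖ := one_mul _

/-- The Fourier multiplier operator `f ↦ 𝓕⁻¹ (m ⬝ 𝓕 f)` with bounded continuous symbol. -/
def fourierMult (F : L2 ≃ₗᵢ[ℂ] L2) (m : ℝ → ℂ) (hm : Continuous m)
    (hm1 : ∀ ξ, ‖m ξ‖ ≤ 1) (f : L2) : L2 :=
  F.symm ((memℒp_mul_symbol m hm hm1 (F f)).toLp _)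

/-- The squared `H^s` norm `‖f‖²_{H^s} = ∫ (1+|ξ|²)^s |𝓕f(ξ)|² dξ ∈ [0,∞]`. -/
def HsNormSq (F : L2 ≃ₗᵢ[ℂ] L2) (s : ℝ) (f : L2) : ℝ≥0∞ :=
  ∫⁻ ξ : ℝ, ENNReal.ofReal ((1 + |ξ| ^ 2) ^ s) * (‖(F f : ℝ → ℂ) ξ‖₊ : ℝ≥0∞) ^ 2

/-- The `H^s` norm `‖f‖_{H^s} ∈ [0,∞]`. -/
def HsNorm (F : L2 ≃ₗᵢ[ℂ] L2) (s : ℝ) (f : L2) : ℝ≥0∞ :=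
  HsNormSq F s f ^ (1 / 2 : ℝ)

lemma Sprop_symbol_cont (τ : ℝ) :
    Continuous fun ξ : ℝ => Complex.exp (-Complex.I * (τ : ℂ) * (ξ : ℂ) ^ 2) := by
  fun_prop

lemma Sprop_symbol_norm (τ : ℝ) (ξ : ℝ) :
    ‖Complex.exp (-Complex.I * (τ : ℂ) * (ξ : ℂ) ^ 2)‖ ≤ 1 := by
  have h : -Complex.I * (τ : ℂ) * (ξ : ℂ) ^ 2 = ((-(τ * ξ ^ 2) : ℝ) : ℂ) * Complex.I := by
    push_cast; ring
  rw [h, Complex.norm_exp_ofReal_mul_I]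

/-- The linear propagator `S_τ = 𝓕⁻¹ e^{−iτ|ξ|²} 𝓕` of `i du + Δu ∘ dW = 0`. -/
def Sprop (F : L2 ≃ₗᵢ[ℂ] L2) (τ : ℝ) : L2 → L2 :=
  fourierMult F (fun ξ : ℝ => Complex.exp (-Complex.I * (τ : ℂ) * (ξ : ℂ) ^ 2))
    (Sprop_symbol_cont τ) (Sprop_symbol_norm τ)

open ProbabilityTheory

lemma norm_cexp_neg_sub_one_le {y : ℝ} (hy : 0 ≤ y) : ‖cexp (-(y : ℂ)) - 1‖ ≤ y := by
  rw [← ofReal_neg, ← ofReal_exp, ← ofReal_one, ← ofReal_sub, norm_real, Real.norm_eq_abs,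
    abs_sub_comm, abs_of_nonneg (sub_nonneg.2 (Real.exp_le_one_iff.2 (neg_nonpos.2 hy)))]
  linarith [Real.add_one_le_exp (-y)]

lemma integral_gaussianReal_cexp_sub_one (v : ℝ≥0) (c : ℝ) :
    ∫ x : ℝ, (cexp (-I * x * c) - 1) ∂(gaussianReal 0 v) = cexp (-(v * c ^ 2 / 2 : ℝ)) - 1 := by
  have h_int : Integrable (fun x : ℝ => cexp (-I * x * c)) (gaussianReal 0 v) := by
    refine (integrable_const (1 : ℝ)).mono' (by fun_prop) (ae_of_all _ fun x => ?_)
    rw [show -I * x * c = ((-(c * x) : ℝ) : ℂ) * I by push_cast; ring, norm_exp_ofReal_mul_I]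
  have h_char : ∫ x : ℝ, cexp (-I * x * c) ∂(gaussianReal 0 v) = charFun (gaussianReal 0 v) (-c) := by
    rw [charFun_apply_real]
    congr 1 with x
    push_cast; ring_nf
  rw [integral_sub h_int (integrable_const 1), h_char, charFun_gaussianReal]
  simp only [integral_const, probReal_univ, one_smul]
  congr 2
  push_cast; ring

lemma norm_integral_gaussianReal_cexp_sub_one_le (v : ℝ≥0) (c : ℝ) :
    ‖∫ x : ℝ, (cexp (-I * x * c) - 1) ∂(gaussianReal 0 v)‖ ≤ v * c ^ 2 / 2 := by
  rw [integral_gaussianReal_cexp_sub_one]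
  exact norm_cexp_neg_sub_one_le (by positivity)

lemma lintegral_symbol_le_HsNormSq (F : L2 ≃ₗᵢ[ℂ] L2) (s k C : ℝ) (m : ℝ → ℂ)
    (hm : ∀ ξ, ‖m ξ‖ ≤ C * (1 + |ξ| ^ 2) ^ k) (f : L2) :
    ∫⁻ ξ : ℝ, ENNReal.ofReal ((1 + |ξ| ^ 2) ^ s) * (‖m ξ‖₊ : ℝ≥0∞) ^ 2
        * (‖(F f : ℝ → ℂ) ξ‖₊ : ℝ≥0∞) ^ 2
      ≤ ENNReal.ofReal (C ^ 2) * HsNormSq F (s + 2 * k) f := by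
  rw [HsNormSq, ← lintegral_const_mul' _ _ ENNReal.ofReal_ne_top]
  refine lintegral_mono fun ξ => ?_
  have hA : 0 < 1 + |ξ| ^ 2 := by positivity
  have h_weight : (1 + |ξ| ^ 2) ^ s * ‖m ξ‖ ^ 2 ≤ C ^ 2 * (1 + |ξ| ^ 2) ^ (s + 2 * k) :=
    calc (1 + |ξ| ^ 2) ^ s * ‖m ξ‖ ^ 2
        ≤ (1 + |ξ| ^ 2) ^ s * (C * (1 + |ξ| ^ 2) ^ k) ^ 2 := by
          gcongr
          exact hm ξ
      _ = C ^ 2 * (1 + |ξ| ^ 2) ^ (s + 2 * k) := by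
          rw [Real.rpow_add hA, show 2 * k = k * (2 : ℕ) by push_cast; ring,
            Real.rpow_mul_natCast hA.le]
          ring
  calc ENNReal.ofReal ((1 + |ξ| ^ 2) ^ s) * (‖m ξ‖₊ : ℝ≥0∞) ^ 2
        * (‖(F f : ℝ → ℂ) ξ‖₊ : ℝ≥0∞) ^ 2
      = ENNReal.ofReal ((1 + |ξ| ^ 2) ^ s * ‖m ξ‖ ^ 2) * (‖(F f : ℝ → ℂ) ξ‖₊ : ℝ≥0∞) ^ 2 := by
        rw [ENNReal.ofReal_mul (by positivity), ENNReal.ofReal_pow (norm_nonneg _), ofReal_norm,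
          enorm_eq_nnnorm]
    _ ≤ ENNReal.ofReal (C ^ 2 * (1 + |ξ| ^ 2) ^ (s + 2 * k))
        * (‖(F f : ℝ → ℂ) ξ‖₊ : ℝ≥0∞) ^ 2 := by gcongr
    _ = _ := by rw [ENNReal.ofReal_mul (sq_nonneg C), mul_assoc]

theorem stmt_9_general (F : L2 ≃ₗᵢ[ℂ] L2)
    (τ : ℝ) (s : ℝ) (f : L2) :
    ∫⁻ ξ : ℝ, ENNReal.ofReal ((1 + |ξ| ^ 2) ^ s)
        * (‖∫ x : ℝ, (Complex.exp (-Complex.I * (x : ℂ) * (ξ : ℂ) ^ 2) - 1)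
              ∂(gaussianReal 0 τ.toNNReal)‖₊ : ℝ≥0∞) ^ 2
        * (‖(F f : ℝ → ℂ) ξ‖₊ : ℝ≥0∞) ^ 2
      ≤ ENNReal.ofReal (τ ^ 2 / 4) * HsNormSq F (s + 4) f := by
  have h_symbol (ξ : ℝ) : ‖∫ x : ℝ, (cexp (-I * x * (ξ : ℂ) ^ 2) - 1) ∂(gaussianReal 0 τ.toNNReal)‖
      ≤ τ.toNNReal / 2 * (1 + |ξ| ^ 2) ^ (2 : ℝ) := by
    have h := norm_integral_gaussianReal_cexp_sub_one_le τ.toNNReal (ξ ^ 2)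
    push_cast at h
    refine h.trans ?_
    rw [Real.rpow_two, sq_abs, mul_div_right_comm]
    gcongr
    nlinarith [sq_nonneg ξ]
  have h_const : (τ.toNNReal / 2 : ℝ) ^ 2 ≤ τ ^ 2 / 4 := by
    rw [Real.coe_toNNReal']
    rcases le_total τ 0 with h | h <;> simp [h] <;> nlinarith
  calc _ ≤ ENNReal.ofReal ((τ.toNNReal / 2 : ℝ) ^ 2) * HsNormSq F (s + 2 * 2) f :=
        lintegral_symbol_le_HsNormSq F s 2 _ _ h_symbol f
    _ ≤ _ := by
        rw [show s + 2 * 2 = s + 4 by norm_num]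
        gcongr

open ProbabilityTheory in
/-- second-order estimate on the expected propagator: for the centered
Gaussian measure `γ_τ` with variance `τ > 0` and `f` with finite `H^{s+4}` norm,
`∫ (1+|ξ|²)^s |∫ (e^{−ix|ξ|²} − 1) dγ_τ(x)|² |𝓕f(ξ)|² dξ ≤ (τ²/4) ‖f‖²_{H^{s+4}}`. -/
theorem stmt_9 (F : L2 ≃ₗᵢ[ℂ] L2) (hF : IsFourierPlancherel F)
    (τ : ℝ) (hτ : 0 < τ) (s : ℝ) (f : L2) (hf : HsNorm F (s + 4) f < ⊤) :
    ∫⁻ ξ : ℝ, ENNReal.ofReal ((1 + |ξ| ^ 2) ^ s)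
        * (‖∫ x : ℝ, (Complex.exp (-Complex.I * (x : ℂ) * (ξ : ℂ) ^ 2) - 1)
              ∂(gaussianReal 0 τ.toNNReal)‖₊ : ℝ≥0∞) ^ 2
        * (‖(F f : ℝ → ℂ) ξ‖₊ : ℝ≥0∞) ^ 2
      ≤ ENNReal.ofReal (τ ^ 2 / 4) * HsNormSq F (s + 4) f :=
  stmt_9_general F τ s f
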